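/- arXiv:1007.0611 — 2 statements merged into one kernel-verified Lean document; each statement's English description precedes it below -/
import Mathlib

section
/- Let a, b be perfect noncrossing matchings on n points (n even) and suppose (i,l) and (j,k) with i<j<k<l are nested arcs of a lying on the same circle of aw(b), with no other arc of that circle between them. Then the number of arcs of a whose left endpoint lies strictly between i and j and whose right endpoint lies strictly between k and l is even. -/
/-- A noncrossing matching of type `(n-k, k)`: `k` pairwise-noncrossing arcs above a
horizontal line of `n` vertices (labelled `1,…,n`); the remaining `n-2k` vertices carry
rays, and no ray lies beneath an arc (every vertex strictly between the endpoints of an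
arc is an endpoint of some arc). -/
structure NCMatching (n k : ℕ) where
  arcs : Finset (ℕ × ℕ)
  card_arcs : arcs.card = k
  mem_range : ∀ p ∈ arcs, 1 ≤ p.1 ∧ p.1 < p.2 ∧ p.2 ≤ n
  endpoints_distinct : ∀ p ∈ arcs, ∀ q ∈ arcs, p ≠ q →
    p.1 ≠ q.1 ∧ p.1 ≠ q.2 ∧ p.2 ≠ q.1 ∧ p.2 ≠ q.2
  noncross : ∀ p ∈ arcs, ∀ q ∈ arcs, ¬ (p.1 < q.1 ∧ q.1 < p.2 ∧ p.2 < q.2)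
  no_ray_under : ∀ p ∈ arcs, ∀ r, p.1 < r → r < p.2 → ∃ q ∈ arcs, r = q.1 ∨ r = q.2

/-- Vertex `i` carries a ray of the matching `m`. -/
def NCMatching.IsRay {n k : ℕ} (m : NCMatching n k) (i : ℕ) : Prop :=
  1 ≤ i ∧ i ≤ n ∧ ∀ p ∈ m.arcs, p.1 ≠ i ∧ p.2 ≠ i

/-- The adjacency relation on vertices coming from the glued one-manifold `a w(b)`:
two vertices are related if an arc of `a` or an arc of (the reflection of) `b` joins them. -/
def glueRel {n k : ℕ} (a b : NCMatching n k) (i j : ℕ) : Prop :=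
  (i, j) ∈ a.arcs ∨ (j, i) ∈ a.arcs ∨ (i, j) ∈ b.arcs ∨ (j, i) ∈ b.arcs

/-- Two vertices lie on the same connected component of `a w(b)`. -/
def Conn {n k : ℕ} (a b : NCMatching n k) : ℕ → ℕ → Prop :=
  Relation.ReflTransGen (glueRel a b)

/-!
Let `S` be the circle of `a w(b)` through `i` and `j`. Count, for each vertex `y`, the vertices
below `y` that are off `S`, mod 2. Walking along an arc `(p, q)` of `a` or `b` from a vertex of
`S` does not change this count: the vertices strictly under `(p, q)` are paired off by the arcs
under it, and each pair lies on a single circle. Since `j ∈ S`, an even number of vertices of the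
interval `(i, j)` lie off `S`. The arcs of `a` meeting `(i, j)` either lie inside it or are arcs
between `(i, l)` and `(j, k)`; the latter are off `S` by hypothesis, so an even number of vertices
of `(i, j)` lie on `S` as well. Hence `(i, j)` has an even number of vertices, and since its
vertices other than the left endpoints of arcs between are paired off by `a`, the number of arcs
between is even.
-/

open Finset

lemma card_filter_range_eq_add (Q : ℕ → Prop) [DecidablePred Q] {p q : ℕ} (hpq : p < q)
    (hp : ¬Q p) :
    ((range q).filter Q).card = ((range p).filter Q).card + ((Ioo p q).filter Q).card := by
  rw [range_eq_Ico, range_eq_Ico, ← Ico_union_Ico_eq_Ico (Nat.zero_le p) hpq.le, filter_union,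
    card_union_of_disjoint (disjoint_filter_filter (Ico_disjoint_Ico_consecutive 0 p q)),
    ← Ioo_insert_left hpq, filter_insert, if_neg hp]

lemma filter_Ioo_lt_and {α : Type*} [LinearOrder α] [LocallyFiniteOrder α] (Q : α → Prop)
    [DecidablePred Q] {i j l : α} (hjl : j ≤ l) :
    (Ioo i l).filter (fun v => v < j ∧ Q v) = (Ioo i j).filter Q := by
  ext v
  simp only [mem_filter, mem_Ioo]
  constructor
  · rintro ⟨⟨hiv, -⟩, hvj, hQ⟩
    exact ⟨⟨hiv, hvj⟩, hQ⟩
  · rintro ⟨⟨hiv, hvj⟩, hQ⟩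
    exact ⟨⟨hiv, hvj.trans_le hjl⟩, hvj, hQ⟩

namespace NCMatching

variable {n K : ℕ} (c : NCMatching n K)

def arcsBetween (i j k l : ℕ) : Finset (ℕ × ℕ) :=
  c.arcs.filter (fun q => i < q.1 ∧ q.1 < j ∧ k < q.2 ∧ q.2 < l)

lemma fst_lt_snd {r : ℕ × ℕ} (hr : r ∈ c.arcs) : r.1 < r.2 := (c.mem_range r hr).2.1

lemma eq_of_fst_eq {p q : ℕ × ℕ} (hp : p ∈ c.arcs) (hq : q ∈ c.arcs) (h : p.1 = q.1) :
    p = q := by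
  by_contra hne
  exact (c.endpoints_distinct p hp q hq hne).1 h

lemma snd_ne_fst {p q : ℕ × ℕ} (hp : p ∈ c.arcs) (hq : q ∈ c.arcs) : p.2 ≠ q.1 := by
  by_cases hpq : p = q
  · subst hpq
    exact (c.fst_lt_snd hp).ne'
  · exact (c.endpoints_distinct p hp q hq hpq).2.2.1

lemma snd_lt_or_lt_snd {j k : ℕ} {r : ℕ × ℕ} (hjk : (j, k) ∈ c.arcs) (hr : r ∈ c.arcs)
    (hrj : r.1 < j) : r.2 < j ∨ k < r.2 := by
  have hne : r ≠ (j, k) := by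
    rintro rfl
    exact lt_irrefl _ hrj
  obtain ⟨-, -, h2j, h2k⟩ := c.endpoints_distinct r hr (j, k) hjk hne
  have := c.noncross r hr (j, k) hjk
  simp only at h2j h2k this
  omega

lemma exists_arc_under_of_mem_Ioo {p q v : ℕ} (hpq : (p, q) ∈ c.arcs) (hv : v ∈ Ioo p q) :
    ∃ r ∈ c.arcs, p < r.1 ∧ r.2 < q ∧ (v = r.1 ∨ v = r.2) := by
  obtain ⟨hpv, hvq⟩ := mem_Ioo.1 hv
  obtain ⟨r, hr, hvr⟩ := c.no_ray_under (p, q) hpq v hpv hvq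
  have hne : (p, q) ≠ r := by
    rintro rfl
    simp only at hvr
    omega
  obtain ⟨h1, -, -, h4⟩ := c.endpoints_distinct (p, q) hpq r hr hne
  have := c.noncross (p, q) hpq r hr
  have := c.noncross r hr (p, q) hpq
  have := c.fst_lt_snd hr
  simp only at *
  exact ⟨r, hr, by omega, by omega, hvr⟩

lemma card_image_fst {A : Finset (ℕ × ℕ)} (hA : A ⊆ c.arcs) :
    (A.image Prod.fst).card = A.card :=
  card_image_of_injOn fun _ hp _ hq => c.eq_of_fst_eq (hA hp) (hA hq)

lemma fst_mem_image_fst_iff {A : Finset (ℕ × ℕ)} (hA : A ⊆ c.arcs) {r : ℕ × ℕ}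
    (hr : r ∈ c.arcs) : r.1 ∈ A.image Prod.fst ↔ r ∈ A := by
  refine ⟨fun h => ?_, fun h => mem_image_of_mem _ h⟩
  obtain ⟨q, hq, hqr⟩ := mem_image.1 h
  rwa [← c.eq_of_fst_eq (hA hq) hr hqr]

lemma snd_notMem_image_fst {A : Finset (ℕ × ℕ)} (hA : A ⊆ c.arcs) {r : ℕ × ℕ}
    (hr : r ∈ c.arcs) : r.2 ∉ A.image Prod.fst := fun h => by
  obtain ⟨q, hq, hqr⟩ := mem_image.1 h
  exact c.snd_ne_fst hr (hA hq) hqr.symm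

lemma card_biUnion_endpoints {A : Finset (ℕ × ℕ)} (hA : A ⊆ c.arcs) :
    (A.biUnion fun r => {r.1, r.2}).card = 2 * A.card := by
  rw [card_biUnion, sum_const_nat (m := 2) fun r hr => card_pair (c.fst_lt_snd (hA hr)).ne,
    mul_comm]
  intro p hp q hq hpq
  obtain ⟨h1, h2, h3, h4⟩ := c.endpoints_distinct p (hA hp) q (hA hq) hpq
  simp only [Function.onFun, disjoint_insert_left, disjoint_insert_right, disjoint_singleton,
    mem_insert, mem_singleton]
  omega

lemma even_card_filter_Ioo {p q : ℕ} (hpq : (p, q) ∈ c.arcs) (P : ℕ → Prop) [DecidablePred P]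
    (hP : ∀ r ∈ c.arcs, p < r.1 → r.2 < q → (P r.1 ↔ P r.2)) :
    Even ((Ioo p q).filter P).card := by
  have hunion : (Ioo p q).filter P =
      (c.arcs.filter fun r => p < r.1 ∧ r.2 < q ∧ P r.1).biUnion fun r => {r.1, r.2} := by
    ext v
    simp only [mem_filter, mem_biUnion, mem_insert, mem_singleton, mem_Ioo]
    constructor
    · rintro ⟨hv, hPv⟩
      obtain ⟨r, hr, h1, h2, rfl | rfl⟩ := c.exists_arc_under_of_mem_Ioo hpq (mem_Ioo.2 hv)
      · exact ⟨r, ⟨hr, h1, h2, hPv⟩, Or.inl rfl⟩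
      · exact ⟨r, ⟨hr, h1, h2, (hP r hr h1 h2).2 hPv⟩, Or.inr rfl⟩
    · rintro ⟨r, ⟨hr, h1, h2, hP1⟩, rfl | rfl⟩ <;> have := c.fst_lt_snd hr
      · exact ⟨⟨h1, by omega⟩, hP1⟩
      · exact ⟨⟨by omega, h2⟩, (hP r hr h1 h2).1 hP1⟩
  rw [hunion, c.card_biUnion_endpoints (filter_subset _ _)]
  exact even_two_mul _

lemma card_filter_range_modEq_of_mem_arcs (P : ℕ → Prop) [DecidablePred P]
    (hP : ∀ r ∈ c.arcs, P r.1 ↔ P r.2) {p q : ℕ} (hpq : (p, q) ∈ c.arcs) (hp : P p) :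
    ((range q).filter (¬P ·)).card ≡ ((range p).filter (¬P ·)).card [MOD 2] := by
  obtain ⟨t, ht⟩ := c.even_card_filter_Ioo hpq (¬P ·) fun r hr _ _ => not_congr (hP r hr)
  have hlt : p < q := c.fst_lt_snd hpq
  rw [card_filter_range_eq_add _ hlt (not_not.2 hp), ht, Nat.ModEq]
  omega

end NCMatching

section Circles

variable {n K : ℕ} {a b : NCMatching n K}

lemma glueRel_symm {u w : ℕ} (h : glueRel a b u w) : glueRel a b w u := by
  unfold glueRel at *
  tauto

lemma conn_iff_of_glueRel {x u w : ℕ} (h : glueRel a b u w) : Conn a b x u ↔ Conn a b x w :=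
  ⟨fun hu => hu.tail h, fun hw => hw.tail (glueRel_symm h)⟩

lemma card_filter_range_not_conn_modEq {x y : ℕ} [DecidablePred (Conn a b x)]
    (hxy : Conn a b x y) :
    ((range y).filter (¬Conn a b x ·)).card ≡ ((range x).filter (¬Conn a b x ·)).card [MOD 2] := by
  have ha : ∀ r ∈ a.arcs, Conn a b x r.1 ↔ Conn a b x r.2 := fun r hr =>
    conn_iff_of_glueRel (Or.inl hr)
  have hb : ∀ r ∈ b.arcs, Conn a b x r.1 ↔ Conn a b x r.2 := fun r hr =>
    conn_iff_of_glueRel (Or.inr (Or.inr (Or.inl hr)))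
  induction hxy with
  | refl => rfl
  | @tail u w hxu huw ih =>
    refine Nat.ModEq.trans ?_ ih
    have hxw : Conn a b x w := hxu.tail huw
    rcases huw with h | h | h | h
    · exact a.card_filter_range_modEq_of_mem_arcs _ ha h hxu
    · exact (a.card_filter_range_modEq_of_mem_arcs _ ha h hxw).symm
    · exact b.card_filter_range_modEq_of_mem_arcs _ hb h hxu
    · exact (b.card_filter_range_modEq_of_mem_arcs _ hb h hxw).symm

lemma even_card_filter_Ioo_not_conn {x y : ℕ} [DecidablePred (Conn a b x)] (hxy : x < y)
    (hconn : Conn a b x y) : Even ((Ioo x y).filter (¬Conn a b x ·)).card := by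
  have hmod := card_filter_range_not_conn_modEq hconn
  rw [card_filter_range_eq_add _ hxy (not_not.2 .refl), Nat.ModEq] at hmod
  rw [Nat.even_iff]
  omega

end Circles

section NestedArcs

variable {n K : ℕ} {a b : NCMatching n K} {i j k l : ℕ}

lemma even_card_filter_Ioo_conn [DecidablePred (Conn a b i)] (hjk : j < k) (hkl : k < l)
    (houter : (i, l) ∈ a.arcs) (hinner : (j, k) ∈ a.arcs)
    (hnone : ∀ q ∈ a.arcs, i < q.1 → q.1 < j → k < q.2 → q.2 < l → ¬ Conn a b i q.1) :
    Even ((Ioo i j).filter (Conn a b i ·)).card := by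
  rw [← filter_Ioo_lt_and _ (hjk.trans hkl).le]
  refine a.even_card_filter_Ioo houter _ fun r hr hir hrl => ?_
  have hconn : Conn a b i r.1 ↔ Conn a b i r.2 := conn_iff_of_glueRel (Or.inl hr)
  have hr12 := a.fst_lt_snd hr
  rcases lt_or_ge r.1 j with hrj | hjr
  · rcases a.snd_lt_or_lt_snd hinner hr hrj with hrj' | hkr
    · simp only [hrj, hrj', hconn, true_and]
    · have hoff := hnone r hr hir hrj hkr hrl
      constructor
      · rintro ⟨-, hon⟩
        exact absurd hon hoff
      · rintro ⟨hrj', -⟩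
        omega
  · constructor <;> rintro ⟨h, -⟩ <;> omega

lemma card_Ioo_modEq_card_arcsBetween (hjk : j < k) (hkl : k < l)
    (houter : (i, l) ∈ a.arcs) (hinner : (j, k) ∈ a.arcs) :
    (Ioo i j).card ≡ (a.arcsBetween i j k l).card [MOD 2] := by
  have hB : a.arcsBetween i j k l ⊆ a.arcs := filter_subset _ _
  set F := (a.arcsBetween i j k l).image Prod.fst
  have hF : F ⊆ Ioo i j := by
    intro v hv
    obtain ⟨q, hq, rfl⟩ := mem_image.1 hv
    obtain ⟨-, hiq, hqj, -⟩ := mem_filter.1 hq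
    exact mem_Ioo.2 ⟨hiq, hqj⟩
  have hrest : Even (Ioo i j \ F).card := by
    rw [← inter_eq_right.2 hF, ← filter_mem_eq_inter, ← filter_not,
      ← filter_Ioo_lt_and _ (hjk.trans hkl).le]
    refine a.even_card_filter_Ioo houter _ fun r hr hir hrl => ?_
    have hr12 := a.fst_lt_snd hr
    have hr1F : r.1 ∈ F ↔ r ∈ a.arcsBetween i j k l := a.fst_mem_image_fst_iff hB hr
    have hr2F : r.2 ∉ F := a.snd_notMem_image_fst hB hr
    rcases lt_or_ge r.1 j with hrj | hjr
    · rcases a.snd_lt_or_lt_snd hinner hr hrj with hrj' | hkr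
      · have hr1F' : r.1 ∉ F := fun h => by
          obtain ⟨-, -, -, hkr, -⟩ := mem_filter.1 (hr1F.1 h)
          omega
        simp only [hrj, hrj', hr1F', hr2F, not_false_eq_true, and_self]
      · have hr1F' : r.1 ∈ F := hr1F.2 (mem_filter.2 ⟨hr, hir, hrj, hkr, hrl⟩)
        simp only [hr1F', not_true_eq_false, and_false, false_iff, not_and]
        omega
    · constructor <;> rintro ⟨h, -⟩ <;> omega
  rw [← card_sdiff_add_card_eq_card hF, a.card_image_fst hB]
  obtain ⟨t, ht⟩ := hrest
  rw [ht, Nat.ModEq]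
  omega

end NestedArcs

/-- Suppose `(i,l)` and `(j,k)` (`i<j<k<l`) are nested arcs of the perfect matching `a`
lying on the same circle of `a w(b)`, with no other arc of that circle between them.
Then the number of arcs of `a` lying between `(i,l)` and `(j,k)` is even. -/
theorem arcs_between_nested_even (m : ℕ) (a b : NCMatching (2 * m) m)
    (i j k l : ℕ) (hij : i < j) (hjk : j < k) (hkl : k < l)
    (houter : (i, l) ∈ a.arcs) (hinner : (j, k) ∈ a.arcs)
    (hsame : Conn a b i j)
    (hnone : ∀ q ∈ a.arcs, i < q.1 → q.1 < j → k < q.2 → q.2 < l → ¬ Conn a b i q.1) :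
    Even ((a.arcs.filter (fun q => i < q.1 ∧ q.1 < j ∧ k < q.2 ∧ q.2 < l)).card) := by
  classical
  show Even (a.arcsBetween i j k l).card
  have hoff := even_card_filter_Ioo_not_conn hij hsame
  have hon := even_card_filter_Ioo_conn hjk hkl houter hinner hnone
  have hsplit := card_filter_add_card_filter_not (s := Ioo i j) (Conn a b i ·)
  have hmod := card_Ioo_modEq_card_arcsBetween hjk hkl houter hinner
  rw [Nat.even_iff] at hoff hon ⊢
  unfold Nat.ModEq at hmod
  omega
end

section
/- For any two perfect noncrossing matchings a and b on n points (n even), there exists a matching c with d(a,b) = d(a,c) + d(c,b) and a minimal sequence from a to b of the form a ← ⋯ ← c → ⋯ → b (all backward moves followed by all forward moves); i.e., c ≼ a and c ≼ b in the partial order generated by →. -/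
/-- The glue relation transported to `Fin n` (the vertex `i : Fin n` has label `i+1`). -/
def glueRelF {n k : ℕ} (a b : NCMatching n k) (i j : Fin n) : Prop :=
  glueRel a b ((i : ℕ) + 1) ((j : ℕ) + 1)

/-- `comps a b = |a w(b)|`, the number of connected components (circles and line
segments) of the glued one-manifold `a w(b)`. -/
noncomputable def comps {n k : ℕ} (a b : NCMatching n k) : ℕ :=
  Nat.card (Quot (glueRelF a b))

/-- The elementary move `a → b`: either two unnested arcs `(i,j), (l,m)` of `a` are replaced
by the nested arcs `(i,m), (j,l)` on the same four vertices, or an arc-ray pair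
`(i), (j,l)` with `i<j<l` is replaced by `(i,j), (l)`; the matchings agree elsewhere. -/
def Move {n k : ℕ} (a b : NCMatching n k) : Prop :=
  (∃ i j l m : ℕ, i < j ∧ j < l ∧ l < m ∧ (i, j) ∈ a.arcs ∧ (l, m) ∈ a.arcs ∧
    b.arcs = insert (i, m) (insert (j, l) ((a.arcs.erase (i, j)).erase (l, m)))) ∨
  (∃ i j l : ℕ, i < j ∧ j < l ∧ a.IsRay i ∧ (j, l) ∈ a.arcs ∧
    b.arcs = insert (i, j) (a.arcs.erase (j, l)))

/-- A sequence of matchings in which each consecutive pair is related by `→` or `←`. -/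
def IsMoveSeq {n k d : ℕ} (f : Fin (d + 1) → NCMatching n k) : Prop :=
  ∀ i : Fin d, Move (f i.castSucc) (f i.succ) ∨ Move (f i.succ) (f i.castSucc)

/-- The distance `d(a,b)`: the minimal number of moves `→` or `←` needed to go from `a` to `b`. -/
noncomputable def mdist {n k : ℕ} (a b : NCMatching n k) : ℕ :=
  sInf {d : ℕ | ∃ f : Fin (d + 1) → NCMatching n k,
    f 0 = a ∧ f (Fin.last d) = b ∧ IsMoveSeq f}

/-!
Moves strictly increase the total length of the arcs, so `Move` is well founded. Every peak
`a → x ← g` can be replaced by a valley `a ← ⋯ ← t → ⋯ → g` of length at most two: `a` and `g`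
undo two parent–child pairs of `x`, and according to whether these pairs coincide, share the
parent, form a chain or are disjoint, one writes down `t` explicitly. By well-founded induction
this resolves every peak of a walk, so a shortest walk from `a` to `b` can be rearranged into a
valley of no greater length; its bottom is the matching `c`. Walks exist because every matching
descends to `(1,2), (3,4), …`, the only matching that no move leads to.
-/

namespace Relation

variable {α : Type*} {r s : α → α → Prop} {a b c : α} {m n : ℕ}

inductive Walk (r : α → α → Prop) : α → α → ℕ → Prop
  | refl (a : α) : Walk r a a 0
  | cons {a b c : α} {n : ℕ} : r a b → Walk r b c n → Walk r a c (n + 1)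

namespace Walk

theorem single (h : r a b) : Walk r a b 1 :=
  cons h (refl b)

theorem append (h₁ : Walk r a b m) (h₂ : Walk r b c n) : Walk r a c (m + n) := by
  induction h₁ with
  | refl => simpa using h₂
  | cons h _ ih => rw [Nat.add_right_comm]; exact cons h (ih h₂)

theorem reverse (h : Walk r a b n) : Walk (flip r) b a n := by
  induction h with
  | refl a => exact refl a
  | cons h _ ih => exact ih.append (single h)

theorem mono (hrs : ∀ a b, r a b → s a b) (h : Walk r a b n) : Walk s a b n := by
  induction h with
  | refl a => exact refl a
  | cons h _ ih => exact cons (hrs _ _ h) ih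

theorem reflTransGen (h : Walk r a b n) : ReflTransGen r a b := by
  induction h with
  | refl => exact ReflTransGen.refl
  | cons h _ ih => exact ReflTransGen.head h ih

theorem iff_exists_fin :
    Walk r a b n ↔ ∃ f : Fin (n + 1) → α,
      f 0 = a ∧ f (Fin.last n) = b ∧ ∀ i : Fin n, r (f i.castSucc) (f i.succ) := by
  induction n generalizing a with
  | zero =>
    constructor
    · rintro ⟨⟩
      exact ⟨fun _ => b, rfl, rfl, Fin.elim0⟩
    · rintro ⟨f, rfl, rfl, -⟩
      exact refl _
  | succ n ih =>
    constructor
    · rintro (_ | ⟨hab, hb⟩)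
      obtain ⟨f, rfl, hlast, hf⟩ := ih.1 hb
      refine ⟨Fin.cons a f, rfl, hlast, Fin.cases hab fun i => ?_⟩
      simpa [← Fin.succ_castSucc] using hf i
    · rintro ⟨f, rfl, rfl, hf⟩
      refine cons (hf 0) (ih.2 ⟨Fin.tail f, rfl, rfl, fun i => ?_⟩)
      simpa [Fin.tail, ← Fin.succ_castSucc] using hf i.succ

end Walk

/-- A walk of length at most `n` that descends from `a` to some `c` and then ascends to `b`;
`r u x` is read as "`u` lies below `x`". -/
def Valley (r : α → α → Prop) (a b : α) (n : ℕ) : Prop :=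
  ∃ c p q, p + q ≤ n ∧ Walk (flip r) a c p ∧ Walk r c b q

/-- Induction on the common top `x`: resolve the topmost peak by `hpeak`, then the smaller peak
below `x` on the side of `b`, then the one on the side of `a`. -/
theorem valley_of_descents (hwf : WellFounded r)
    (hpeak : ∀ a x b, r a x → r b x → Valley r a b 2) {x a b : α} {p q : ℕ}
    (hxa : Walk (flip r) x a p) (hxb : Walk (flip r) x b q) : Valley r a b (p + q) := by
  induction x using hwf.induction generalizing a b p q with
  | _ x ih =>
    rcases hxa with _ | ⟨hyx, hya⟩
    · exact ⟨b, q, 0, by omega, hxb, Walk.refl b⟩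
    rcases hxb with _ | ⟨hgx, hgb⟩
    · exact ⟨a, 0, _, by omega, Walk.refl a, (Walk.cons hyx hya).reverse⟩
    obtain ⟨t, p₁, q₁, h₁, hyt, htg⟩ := hpeak _ _ _ hyx hgx
    obtain ⟨c₁, p₂, q₂, h₂, htc₁, hc₁b⟩ := ih _ hgx htg.reverse hgb
    obtain ⟨c, p₃, q₃, h₃, hac, hcc₁⟩ := ih _ hyx hya (hyt.append htc₁)
    exact ⟨c, p₃, q₃ + q₂, by omega, hac, hcc₁.append hc₁b⟩

theorem valley_of_walk_symmGen (hwf : WellFounded r)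
    (hpeak : ∀ a x b, r a x → r b x → Valley r a b 2) (h : Walk (SymmGen r) a b n) :
    Valley r a b n := by
  induction h with
  | refl => exact ⟨_, 0, 0, le_rfl, Walk.refl _, Walk.refl _⟩
  | cons hay _ ih =>
    obtain ⟨c, p, q, hpq, hyc, hcb⟩ := ih
    rcases hay with hay | hya
    · obtain ⟨c', p', q', h', hac', hc'c⟩ := valley_of_descents hwf hpeak (Walk.single hay) hyc
      exact ⟨c', p', q' + q, by omega, hac', hc'c.append hcb⟩
    · exact ⟨c, p + 1, q, by omega, Walk.cons hya hyc, hcb⟩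

theorem exists_walk_to_minimal (hwf : WellFounded r) (x : α) :
    ∃ c n, Walk (flip r) x c n ∧ ∀ u, ¬ r u c := by
  induction x using hwf.induction with
  | _ x ih =>
    by_cases hx : ∃ y, r y x
    · obtain ⟨y, hyx⟩ := hx
      obtain ⟨c, n, hyc, hc⟩ := ih y hyx
      exact ⟨c, n + 1, Walk.cons hyx hyc, hc⟩
    · exact ⟨x, 0, Walk.refl x, fun u hu => hx ⟨u, hu⟩⟩

end Relation

open Relation

section Matchings

variable {m : ℕ}

theorem Finset.exists_endpoint_eq_of_card_eq {s : Finset (ℕ × ℕ)} (hcard : s.card = m)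
    (hrange : ∀ p ∈ s, 1 ≤ p.1 ∧ p.1 < p.2 ∧ p.2 ≤ 2 * m)
    (hdisj : ∀ p ∈ s, ∀ q ∈ s, p ≠ q → p.1 ≠ q.1 ∧ p.1 ≠ q.2 ∧ p.2 ≠ q.1 ∧ p.2 ≠ q.2)
    {r : ℕ} (hr₁ : 1 ≤ r) (hr₂ : r ≤ 2 * m) : ∃ p ∈ s, r = p.1 ∨ r = p.2 := by
  classical
  set E := s.biUnion fun p => {p.1, p.2}
  have hE : E.card = 2 * m := by
    rw [Finset.card_biUnion, Finset.sum_const_nat (m := 2), hcard, mul_comm]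
    · intro p hp
      exact Finset.card_pair (hrange p hp).2.1.ne
    · intro p hp q hq hpq
      have := hdisj p hp q hq hpq
      simp only [Function.onFun, Finset.disjoint_insert_left, Finset.disjoint_insert_right,
        Finset.disjoint_singleton, Finset.mem_insert, Finset.mem_singleton]
      tauto
  have hEsub : E ⊆ Finset.Icc 1 (2 * m) := by
    intro x hx
    obtain ⟨p, hp, hx⟩ := Finset.mem_biUnion.1 hx
    have := hrange p hp
    simp only [Finset.mem_insert, Finset.mem_singleton] at hx
    rw [Finset.mem_Icc]
    omega
  have hrE : r ∈ E := by
    rw [Finset.eq_of_subset_of_card_le hEsub (by simp [hE])]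
    exact Finset.mem_Icc.2 ⟨hr₁, hr₂⟩
  obtain ⟨p, hp, hr⟩ := Finset.mem_biUnion.1 hrE
  exact ⟨p, hp, by simpa using hr⟩

namespace NCMatching

theorem ext_arcs {n k : ℕ} {a b : NCMatching n k} (h : a.arcs = b.arcs) : a = b := by
  cases a; cases b; congr

theorem exists_endpoint_eq (x : NCMatching (2 * m) m) {r : ℕ} (hr₁ : 1 ≤ r) (hr₂ : r ≤ 2 * m) :
    ∃ p ∈ x.arcs, r = p.1 ∨ r = p.2 :=
  Finset.exists_endpoint_eq_of_card_eq x.card_arcs x.mem_range x.endpoints_distinct hr₁ hr₂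

theorem not_isRay (x : NCMatching (2 * m) m) (i : ℕ) : ¬ x.IsRay i := by
  rintro ⟨hi₁, hi₂, hray⟩
  obtain ⟨p, hp, hip⟩ := x.exists_endpoint_eq hi₁ hi₂
  have := hray p hp
  omega

end NCMatching

/-- Undoes the move that turns `(i,j), (k,l)` into `(i,l) ⊃ (j,k)`. -/
def unnestArcs (s : Finset (ℕ × ℕ)) (i j k l : ℕ) : Finset (ℕ × ℕ) :=
  insert (i, j) (insert (k, l) ((s.erase (i, l)).erase (j, k)))

/-- The pairs of nested arcs that a move can have produced: `(j,k)` lies directly under `(i,l)`. -/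
def IsChildArc (s : Finset (ℕ × ℕ)) (i j k l : ℕ) : Prop :=
  (i, l) ∈ s ∧ (j, k) ∈ s ∧ i < j ∧ j < k ∧ k < l ∧
    ∀ p ∈ s, ¬ (i < p.1 ∧ p.1 < j ∧ k < p.2 ∧ p.2 < l)

theorem mem_unnestArcs {s : Finset (ℕ × ℕ)} {i j k l : ℕ} {p : ℕ × ℕ} :
    p ∈ unnestArcs s i j k l ↔
      p = (i, j) ∨ p = (k, l) ∨ (p ≠ (j, k) ∧ p ≠ (i, l) ∧ p ∈ s) := by
  simp [unnestArcs]

theorem move_iff_isChildArc {u x : NCMatching (2 * m) m} :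
    Move u x ↔ ∃ i j k l, IsChildArc x.arcs i j k l ∧ u.arcs = unnestArcs x.arcs i j k l := by
  have hu := u.endpoints_distinct
  have hx := x.endpoints_distinct
  constructor
  · rintro (⟨i, j, k, l, hij, hjk, hkl, hu₁, hu₂, hux⟩ | ⟨i, -, -, -, -, hray, -⟩)
    · have hc := u.noncross
      refine ⟨i, j, k, l, ⟨by simp [hux], by simp [hux], hij, hjk, hkl, ?_⟩, ?_⟩
      · rintro ⟨p₁, p₂⟩ hp
        simp only [hux, Finset.mem_insert, Finset.mem_erase, Prod.mk.injEq] at hp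
        grind
      · ext ⟨p₁, p₂⟩
        simp only [mem_unnestArcs, hux, Finset.mem_insert, Finset.mem_erase, Prod.mk.injEq, ne_eq]
        grind
    · exact absurd hray (u.not_isRay i)
  · rintro ⟨i, j, k, l, ⟨hx₁, hx₂, hij, hjk, hkl, -⟩, hux⟩
    refine Or.inl ⟨i, j, k, l, hij, hjk, hkl, by simp [hux, unnestArcs],
      by simp [hux, unnestArcs], ?_⟩
    ext ⟨p₁, p₂⟩
    simp only [hux, unnestArcs, Finset.mem_insert, Finset.mem_erase, Prod.mk.injEq, ne_eq]
    grind

theorem exists_arcs_eq_unnestArcs {x : NCMatching (2 * m) m} {i j k l : ℕ}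
    (h : IsChildArc x.arcs i j k l) :
    ∃ u : NCMatching (2 * m) m, u.arcs = unnestArcs x.arcs i j k l := by
  obtain ⟨hx₁, hx₂, hij, hjk, hkl, hgap⟩ := h
  have hd := x.endpoints_distinct
  have hc := x.noncross
  have hr := x.mem_range
  have hcard : (unnestArcs x.arcs i j k l).card = m := by
    have hx₁' : (i, j) ∉ x.arcs := fun h => by grind
    have hx₂' : (k, l) ∉ x.arcs := fun h => by grind
    rw [unnestArcs, Finset.card_insert_of_notMem (by simp; grind),
      Finset.card_insert_of_notMem (by simp; grind), Finset.card_erase_of_mem (by simp; grind),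
      Finset.card_erase_of_mem hx₁, x.card_arcs]
    have : 2 ≤ m := x.card_arcs ▸ Finset.one_lt_card.2 ⟨_, hx₁, _, hx₂, by grind⟩
    omega
  have hrange : ∀ p ∈ unnestArcs x.arcs i j k l, 1 ≤ p.1 ∧ p.1 < p.2 ∧ p.2 ≤ 2 * m := by
    rintro ⟨p₁, p₂⟩ hp
    simp only [mem_unnestArcs, Prod.mk.injEq, ne_eq] at hp
    grind
  have hdisj : ∀ p ∈ unnestArcs x.arcs i j k l, ∀ q ∈ unnestArcs x.arcs i j k l, p ≠ q →
      p.1 ≠ q.1 ∧ p.1 ≠ q.2 ∧ p.2 ≠ q.1 ∧ p.2 ≠ q.2 := by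
    rintro ⟨p₁, p₂⟩ hp ⟨q₁, q₂⟩ hq
    simp only [mem_unnestArcs, Prod.mk.injEq, ne_eq] at hp hq
    grind
  refine ⟨⟨_, hcard, hrange, hdisj, ?_, fun p hp r h₁ h₂ => ?_⟩, rfl⟩
  · rintro ⟨p₁, p₂⟩ hp ⟨q₁, q₂⟩ hq
    simp only [mem_unnestArcs, Prod.mk.injEq, ne_eq] at hp hq
    grind
  · have := hrange p hp
    exact Finset.exists_endpoint_eq_of_card_eq hcard hrange hdisj (by omega) (by omega)

theorem move_of_isChildArc {u x : NCMatching (2 * m) m} {i j k l : ℕ}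
    (h : IsChildArc x.arcs i j k l) (hu : u.arcs = unnestArcs x.arcs i j k l) : Move u x :=
  move_iff_isChildArc.2 ⟨i, j, k, l, h, hu⟩

theorem exists_move_of_isChildArc {x : NCMatching (2 * m) m} {i j k l : ℕ}
    (h : IsChildArc x.arcs i j k l) : ∃ u, Move u x ∧ u.arcs = unnestArcs x.arcs i j k l := by
  obtain ⟨u, hu⟩ := exists_arcs_eq_unnestArcs h
  exact ⟨u, move_of_isChildArc h hu, hu⟩

section Peak

variable {x a g : NCMatching (2 * m) m}

theorem exists_common_lower_of_disjoint {i₁ j₁ k₁ l₁ i₂ j₂ k₂ l₂ : ℕ}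
    (h₁ : IsChildArc x.arcs i₁ j₁ k₁ l₁) (ha : a.arcs = unnestArcs x.arcs i₁ j₁ k₁ l₁)
    (h₂ : IsChildArc x.arcs i₂ j₂ k₂ l₂) (hg : g.arcs = unnestArcs x.arcs i₂ j₂ k₂ l₂)
    (hAA : (i₁, l₁) ≠ (i₂, l₂)) (hAB : (i₁, l₁) ≠ (j₂, k₂))
    (hBA : (j₁, k₁) ≠ (i₂, l₂)) (hBB : (j₁, k₁) ≠ (j₂, k₂)) :
    ∃ t, Move t a ∧ Move t g := by
  have hd := x.endpoints_distinct
  have hc := x.noncross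
  have eAA := hd _ h₁.1 _ h₂.1 hAA
  have eAB := hd _ h₁.1 _ h₂.2.1 hAB
  have eBA := hd _ h₁.2.1 _ h₂.1 hBA
  have eBB := hd _ h₁.2.1 _ h₂.2.1 hBB
  unfold IsChildArc at h₁ h₂
  have ha₂ : IsChildArc a.arcs i₂ j₂ k₂ l₂ := by
    unfold IsChildArc
    simp only [ha, mem_unnestArcs, Prod.forall, Prod.mk.injEq, ne_eq]
    grind
  have hg₁ : IsChildArc g.arcs i₁ j₁ k₁ l₁ := by
    unfold IsChildArc
    simp only [hg, mem_unnestArcs, Prod.forall, Prod.mk.injEq, ne_eq]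
    grind
  obtain ⟨t, hta, ht⟩ := exists_move_of_isChildArc ha₂
  refine ⟨t, hta, move_of_isChildArc hg₁ ?_⟩
  ext ⟨p₁, p₂⟩
  simp only [ht, hg, ha, mem_unnestArcs, Prod.mk.injEq, ne_eq] at eAA eAB eBA eBB ⊢
  clear hd hc
  grind

theorem exists_common_lower_of_siblings {i j₁ k₁ j₂ k₂ l : ℕ}
    (h₁ : IsChildArc x.arcs i j₁ k₁ l) (ha : a.arcs = unnestArcs x.arcs i j₁ k₁ l)
    (h₂ : IsChildArc x.arcs i j₂ k₂ l) (hg : g.arcs = unnestArcs x.arcs i j₂ k₂ l)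
    (hk₁j₂ : k₁ < j₂) :
    ∃ t, Move t a ∧ Move t g := by
  have hd := x.endpoints_distinct
  unfold IsChildArc at h₁ h₂
  have ha₂ : IsChildArc a.arcs k₁ j₂ k₂ l := by
    unfold IsChildArc
    simp only [ha, mem_unnestArcs, Prod.forall, Prod.mk.injEq, ne_eq]
    grind
  have hg₁ : IsChildArc g.arcs i j₁ k₁ j₂ := by
    unfold IsChildArc
    simp only [hg, mem_unnestArcs, Prod.forall, Prod.mk.injEq, ne_eq]
    grind
  obtain ⟨t, hta, ht⟩ := exists_move_of_isChildArc ha₂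
  refine ⟨t, hta, move_of_isChildArc hg₁ ?_⟩
  ext ⟨p₁, p₂⟩
  simp only [ht, hg, ha, mem_unnestArcs, Prod.mk.injEq, ne_eq]
  grind

theorem exists_move_move_of_chain {i j j' k' k l : ℕ}
    (h₁ : IsChildArc x.arcs i j k l) (ha : a.arcs = unnestArcs x.arcs i j k l)
    (h₂ : IsChildArc x.arcs j j' k' k) (hg : g.arcs = unnestArcs x.arcs j j' k' k) :
    ∃ t, Move a t ∧ Move t g := by
  have hd := x.endpoints_distinct
  have hc := x.noncross
  unfold IsChildArc at h₁ h₂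
  have hg₁ : IsChildArc g.arcs i k' k l := by
    unfold IsChildArc
    simp only [hg, mem_unnestArcs, Prod.forall, Prod.mk.injEq, ne_eq]
    grind
  obtain ⟨t, htg, ht⟩ := exists_move_of_isChildArc hg₁
  refine ⟨t, move_of_isChildArc (i := i) (j := j) (k := j') (l := k') ?_ ?_, htg⟩
  · unfold IsChildArc
    simp only [ht, hg, mem_unnestArcs, Prod.forall, Prod.mk.injEq, ne_eq]
    grind
  · ext ⟨p₁, p₂⟩
    simp only [ht, hg, ha, mem_unnestArcs, Prod.mk.injEq, ne_eq]
    grind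

theorem valley_of_move_of_move (ha : Move a x) (hg : Move g x) : Valley Move a g 2 := by
  obtain ⟨i₁, j₁, k₁, l₁, h₁, ha⟩ := move_iff_isChildArc.1 ha
  obtain ⟨i₂, j₂, k₂, l₂, h₂, hg⟩ := move_iff_isChildArc.1 hg
  have of_common_lower : (∃ t, Move t a ∧ Move t g) → Valley Move a g 2 :=
    fun ⟨t, hta, htg⟩ => ⟨t, 1, 1, le_rfl, Walk.single hta, Walk.single htg⟩
  by_cases hBA : (j₁, k₁) = (i₂, l₂)
  · obtain ⟨rfl, rfl⟩ := Prod.mk.inj hBA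
    obtain ⟨t, hat, htg⟩ := exists_move_move_of_chain h₁ ha h₂ hg
    exact ⟨a, 0, 2, le_rfl, Walk.refl a, Walk.cons hat (Walk.single htg)⟩
  by_cases hAB : (i₁, l₁) = (j₂, k₂)
  · obtain ⟨rfl, rfl⟩ := Prod.mk.inj hAB
    obtain ⟨t, hgt, hta⟩ := exists_move_move_of_chain h₂ hg h₁ ha
    exact ⟨g, 2, 0, le_rfl, Walk.cons hta (Walk.single hgt), Walk.refl g⟩
  have hd := x.endpoints_distinct
  have hc := x.noncross
  by_cases hAA : (i₁, l₁) = (i₂, l₂)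
  · obtain ⟨rfl, rfl⟩ := Prod.mk.inj hAA
    by_cases hBB : (j₁, k₁) = (j₂, k₂)
    · obtain ⟨rfl, rfl⟩ := Prod.mk.inj hBB
      obtain rfl : a = g := NCMatching.ext_arcs (ha.trans hg.symm)
      exact ⟨a, 0, 0, by omega, Walk.refl a, Walk.refl a⟩
    have hsiblings : k₁ < j₂ ∨ k₂ < j₁ := by
      unfold IsChildArc at h₁ h₂
      grind
    rcases hsiblings with hsiblings | hsiblings
    · exact of_common_lower (exists_common_lower_of_siblings h₁ ha h₂ hg hsiblings)
    · obtain ⟨t, htg, hta⟩ := exists_common_lower_of_siblings h₂ hg h₁ ha hsiblings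
      exact of_common_lower ⟨t, hta, htg⟩
  by_cases hBB : (j₁, k₁) = (j₂, k₂)
  · exfalso
    obtain ⟨rfl, rfl⟩ := Prod.mk.inj hBB
    unfold IsChildArc at h₁ h₂
    grind
  exact of_common_lower (exists_common_lower_of_disjoint h₁ ha h₂ hg hAA hAB hBA hBB)

end Peak

namespace NCMatching

def totalArcLength {n k : ℕ} (x : NCMatching n k) : ℕ :=
  ∑ p ∈ x.arcs, (p.2 - p.1)

theorem totalArcLength_lt_of_move {u x : NCMatching (2 * m) m} (h : Move u x) :
    u.totalArcLength < x.totalArcLength := by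
  obtain ⟨i, j, k, l, ⟨hil, hjk_mem, hij, hjk, hkl, -⟩, hu⟩ := move_iff_isChildArc.1 h
  have hd := x.endpoints_distinct
  have hjk_erase : (j, k) ∈ x.arcs.erase (i, l) := Finset.mem_erase.2 ⟨by grind, hjk_mem⟩
  have hx : x.totalArcLength =
      (l - i) + ((k - j) + ∑ p ∈ (x.arcs.erase (i, l)).erase (j, k), (p.2 - p.1)) := by
    rw [totalArcLength, ← Finset.add_sum_erase _ _ hil, ← Finset.add_sum_erase _ _ hjk_erase]
  have hu' : u.totalArcLength =
      (j - i) + ((l - k) + ∑ p ∈ (x.arcs.erase (i, l)).erase (j, k), (p.2 - p.1)) := by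
    rw [totalArcLength, hu, unnestArcs, Finset.sum_insert (by simp; grind),
      Finset.sum_insert (by simp; grind)]
  omega

theorem wellFounded_move : WellFounded (@Move (2 * m) m) :=
  Subrelation.wf totalArcLength_lt_of_move (measure totalArcLength).wf

/-- An arc of maximal length among those inside `(i,l)` is a child of `(i,l)`. -/
theorem exists_isChildArc_of_lt {x : NCMatching (2 * m) m} {i l : ℕ} (hil : (i, l) ∈ x.arcs)
    (hlong : i + 1 < l) : ∃ j k, IsChildArc x.arcs i j k l := by
  have hd := x.endpoints_distinct
  have hc := x.noncross
  have hr := x.mem_range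
  set inner := x.arcs.filter fun p => i < p.1 ∧ p.2 < l
  have hinner : inner.Nonempty := by
    obtain ⟨p, hp, hip⟩ := x.exists_endpoint_eq (r := i + 1) (by grind) (by grind)
    exact ⟨p, Finset.mem_filter.2 ⟨hp, by grind⟩⟩
  obtain ⟨c, hc', hmax⟩ := inner.exists_max_image (fun p => p.2 - p.1) hinner
  obtain ⟨hcx, hic, hcl⟩ := Finset.mem_filter.1 hc'
  refine ⟨c.1, c.2, hil, hcx, hic, (hr c hcx).2.1, hcl, fun p hp hpc => ?_⟩
  have := hmax p (Finset.mem_filter.2 ⟨hp, by omega⟩)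
  have := hr c hcx
  omega

def minArcs (m : ℕ) : Finset (ℕ × ℕ) :=
  (Finset.range m).image fun i => (2 * i + 1, 2 * i + 2)

theorem arcs_eq_minArcs_of_forall_short {x : NCMatching (2 * m) m}
    (hshort : ∀ p ∈ x.arcs, p.2 = p.1 + 1) : x.arcs = minArcs m := by
  have hd := x.endpoints_distinct
  have hmem : ∀ i < m, (2 * i + 1, 2 * i + 2) ∈ x.arcs := by
    intro i
    induction i using Nat.strong_induction_on with
    | _ i ih =>
      intro hi
      obtain ⟨p, hp, hip⟩ := x.exists_endpoint_eq (r := 2 * i + 1) (by omega) (by omega)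
      have hp₂ := hshort p hp
      have hp₁ := (x.mem_range p hp).1
      rcases hip with hip | hip
      · convert hp using 1
        ext <;> simp <;> omega
      · have hprev := ih (i - 1) (by omega) (by omega)
        have := hd _ hprev _ hp (by grind)
        omega
  symm
  refine Finset.eq_of_subset_of_card_le (fun p hp => ?_) ?_
  · obtain ⟨i, hi, rfl⟩ := Finset.mem_image.1 hp
    exact hmem i (Finset.mem_range.1 hi)
  · rw [x.card_arcs, minArcs, Finset.card_image_of_injective _ (fun i j h => by simp at h; omega),
      Finset.card_range]

theorem arcs_eq_minArcs_of_isMin {x : NCMatching (2 * m) m} (hx : ∀ u, ¬ Move u x) :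
    x.arcs = minArcs m := by
  refine arcs_eq_minArcs_of_forall_short fun ⟨i, l⟩ hil => ?_
  have := (x.mem_range _ hil).2.1
  by_contra hlong
  obtain ⟨j, k, hchild⟩ := exists_isChildArc_of_lt hil (by omega)
  obtain ⟨u, hu, -⟩ := exists_move_of_isChildArc hchild
  exact hx u hu

end NCMatching

open NCMatching

theorem exists_walk_symmGen_move (a b : NCMatching (2 * m) m) :
    ∃ n, Walk (SymmGen Move) a b n := by
  obtain ⟨c, p, hac, hc⟩ := exists_walk_to_minimal wellFounded_move a
  obtain ⟨c', q, hbc', hc'⟩ := exists_walk_to_minimal wellFounded_move b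
  obtain rfl : c = c' := ext_arcs ((arcs_eq_minArcs_of_isMin hc).trans
    (arcs_eq_minArcs_of_isMin hc').symm)
  exact ⟨p + q, (hac.mono fun _ _ h => Or.inr h).append (hbc'.reverse.mono fun _ _ h => Or.inl h)⟩

theorem mdist_le_of_walk {a b : NCMatching (2 * m) m} {n : ℕ} (h : Walk (SymmGen Move) a b n) :
    mdist a b ≤ n :=
  Nat.sInf_le (Walk.iff_exists_fin.1 h)

theorem walk_mdist (a b : NCMatching (2 * m) m) : Walk (SymmGen Move) a b (mdist a b) := by
  obtain ⟨n, h⟩ := exists_walk_symmGen_move a b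
  have hne : {d | ∃ f : Fin (d + 1) → NCMatching (2 * m) m,
      f 0 = a ∧ f (Fin.last d) = b ∧ IsMoveSeq f}.Nonempty := ⟨n, Walk.iff_exists_fin.1 h⟩
  exact Walk.iff_exists_fin.2 (Nat.sInf_mem hne)

end Matchings

/-- For any two perfect noncrossing matchings `a`, `b` on `2m` points there is a matching
`c` with `d(a,b) = d(a,c) + d(c,b)`, `c ≼ a`, `c ≼ b`, and a minimal sequence from `a`
to `b` consisting of backward moves from `a` down to `c` followed by forward moves from
`c` up to `b`. -/
theorem exists_valley_matching (m : ℕ) (a b : NCMatching (2 * m) m) :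
    ∃ c : NCMatching (2 * m) m,
      mdist a b = mdist a c + mdist c b ∧
      Relation.ReflTransGen Move c a ∧
      Relation.ReflTransGen Move c b ∧
      (∃ f : Fin (mdist a c + 1) → NCMatching (2 * m) m,
        f 0 = a ∧ f (Fin.last (mdist a c)) = c ∧
        ∀ i : Fin (mdist a c), Move (f i.succ) (f i.castSucc)) ∧
      (∃ g : Fin (mdist c b + 1) → NCMatching (2 * m) m,
        g 0 = c ∧ g (Fin.last (mdist c b)) = b ∧
        ∀ i : Fin (mdist c b), Move (g i.castSucc) (g i.succ)) := by
  obtain ⟨c, p, q, hpq, hac, hcb⟩ :=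
    valley_of_walk_symmGen NCMatching.wellFounded_move (fun _ _ _ => valley_of_move_of_move)
      (walk_mdist a b)
  have hp : mdist a c ≤ p := mdist_le_of_walk (hac.mono fun _ _ h => Or.inr h)
  have hq : mdist c b ≤ q := mdist_le_of_walk (hcb.mono fun _ _ h => Or.inl h)
  have htri : mdist a b ≤ mdist a c + mdist c b :=
    mdist_le_of_walk ((walk_mdist a c).append (walk_mdist c b))
  obtain rfl : p = mdist a c := by omega
  obtain rfl : q = mdist c b := by omega
  exact ⟨c, by omega, hac.reverse.reflTransGen, hcb.reflTransGen, Walk.iff_exists_fin.1 hac,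
    Walk.iff_exists_fin.1 hcb⟩
end
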